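/- Every heaco (C,P) gives rise to a tripos (C,P^o) on the same base category, where P^o(A) = P(A)^op. -/

import Mathlib

/-!
Every fibre of an eaco is a Boolean algebra. The complement is `¬α x := ∃ y, x = ⌈α⌉ y`, the
`Σ` given by AC of the graph of the co-comprehension arrow of `α`; fullness of co-comprehension
gives `γ ≤ ¬α ↔ γ ⊓ α ≤ ⊥` and `¬¬α = α`, and the compatibility condition makes `¬` commute with
reindexing once reindexing is strict. Strictness `f*⊥ = ⊥` itself comes from the compatibility
condition at `⊥`, except when `f*⊥` is the top of its fibre: then a global element of `X`
chosen by AC makes the fibre over the terminal object trivial, and power objects spread this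
triviality to the fibre over `X`. By De Morgan duality `P^o` is then a tripos, with `Σ` of `P^o`
the `∀ := ¬∃¬` of `P`, `Π` of `P^o` the `Σ` of `P`, and equality `¬δ`.
-/

open CategoryTheory CategoryTheory.Limits

universe w v u

/-- A doctrine: a contravariant functor from a category with finite products
to partially ordered sets, presented via a family of fibers `P` and monotone
reindexing maps. -/
structure Doctrine (C : Type u) [Category.{v} C] (P : C → Type w)
    [∀ A, PartialOrder (P A)] where
  map : ∀ {X A : C}, (X ⟶ A) → P A → P X
  map_mono : ∀ {X A : C} (f : X ⟶ A) ⦃α β : P A⦄, α ≤ β → map f α ≤ map f β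
  map_id : ∀ {A : C} (α : P A), map (𝟙 A) α = α
  map_comp : ∀ {X Y A : C} (f : X ⟶ Y) (g : Y ⟶ A) (α : P A),
    map (f ≫ g) α = map f (map g α)

variable {C : Type u} [Category.{v} C] {P : C → Type w}

/-- The opposite doctrine `P^o`, with fibers the opposite posets. -/
def Doctrine.op [∀ A, PartialOrder (P A)] (D : Doctrine C P) :
    Doctrine C (fun A => (P A)ᵒᵈ) where
  map f α := OrderDual.toDual (D.map f (OrderDual.ofDual α))
  map_mono f _ _ h := D.map_mono f h
  map_id := D.map_id
  map_comp := D.map_comp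

/-- Comprehension structure on a doctrine with fiberwise top elements. -/
structure Comprehension [∀ A, PartialOrder (P A)] [∀ A, OrderTop (P A)]
    (D : Doctrine C P) where
  cObj : ∀ {A : C}, P A → C
  cArr : ∀ {A : C} (α : P A), cObj α ⟶ A
  map_cArr : ∀ {A : C} (α : P A), D.map (cArr α) α = ⊤
  univ : ∀ {A Y : C} (α : P A) (f : Y ⟶ A), D.map f α = ⊤ →
    ∃! k : Y ⟶ cObj α, k ≫ cArr α = f

/-- Fullness of comprehension: the functor `α ↦ ⌊α⌋` into subobjects is full. -/
def Comprehension.IsFull [∀ A, PartialOrder (P A)] [∀ A, OrderTop (P A)]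
    {D : Doctrine C P} (cmp : Comprehension D) : Prop :=
  ∀ (A : C) (α β : P A) (g : cmp.cObj α ⟶ cmp.cObj β),
    g ≫ cmp.cArr β = cmp.cArr α → α ≤ β

/-- Co-comprehension structure on a doctrine with fiberwise bottom elements. -/
structure CoComprehension [∀ A, PartialOrder (P A)] [∀ A, OrderBot (P A)]
    (D : Doctrine C P) where
  oObj : ∀ {A : C}, P A → C
  oArr : ∀ {A : C} (α : P A), oObj α ⟶ A
  map_oArr : ∀ {A : C} (α : P A), D.map (oArr α) α = ⊥
  univ : ∀ {A Y : C} (α : P A) (f : Y ⟶ A), D.map f α = ⊥ →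
    ∃! k : Y ⟶ oObj α, k ≫ oArr α = f

/-- Fullness of co-comprehension: the contravariant functor `α ↦ ⌈α⌉` into
subobjects is full. -/
def CoComprehension.IsFull [∀ A, PartialOrder (P A)] [∀ A, OrderBot (P A)]
    {D : Doctrine C P} (co : CoComprehension D) : Prop :=
  ∀ (A : C) (α β : P A) (g : co.oObj β ⟶ co.oObj α),
    g ≫ co.oArr α = co.oArr β → α ≤ β

/-- A stable initial object: an initial object `Z` with `X × Z ≅ Z` for all `X`. -/
def StableInitial [HasFiniteProducts C] (Z : C) : Prop :=
  Nonempty (IsInitial Z) ∧ ∀ X : C, Nonempty ((X ⨯ Z) ≅ Z)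

/-- The axiom of choice for a doctrine: along every projection `π_Γ : Γ × A → Γ`
with `A` not a stable initial object, reindexing has a left adjoint, and every
`ψ ∈ P(Γ × A)` has a choice arrow `ε_ψ : Γ ⟶ A` with `Σ_{π_Γ}ψ = ⟨id, ε_ψ⟩*ψ`. -/
structure AxChoice [HasFiniteProducts C] [∀ A, PartialOrder (P A)]
    (D : Doctrine C P) where
  Sig : ∀ (Γ A : C), ¬ StableInitial A → P (Γ ⨯ A) → P Γ
  adj : ∀ {Γ A : C} (h : ¬ StableInitial A) (ψ : P (Γ ⨯ A)) (β : P Γ),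
    Sig Γ A h ψ ≤ β ↔ ψ ≤ D.map prod.fst β
  eps : ∀ {Γ A : C}, ¬ StableInitial A → P (Γ ⨯ A) → (Γ ⟶ A)
  eps_spec : ∀ {Γ A : C} (h : ¬ StableInitial A) (ψ : P (Γ ⨯ A)),
    Sig Γ A h ψ = D.map (prod.lift (𝟙 Γ) (eps h ψ)) ψ

/-- Elementary structure: equality predicates `δ_A` such that
`ψ ↦ π₁*ψ ⊓ π₂₃*δ_A` is left adjoint to reindexing along `id_X × Δ_A`. -/
structure Elementary [HasFiniteProducts C] [∀ A, SemilatticeInf (P A)]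
    (D : Doctrine C P) where
  eq : ∀ A : C, P (A ⨯ A)
  eq_adj : ∀ (X A : C) (ψ : P (X ⨯ A)) (φ : P ((X ⨯ A) ⨯ A)),
    (D.map prod.fst ψ ⊓ D.map (prod.map prod.snd (𝟙 A)) (eq A)) ≤ φ ↔
      ψ ≤ D.map (prod.lift (𝟙 (X ⨯ A)) prod.snd) φ

/-- An eaco: an elementary doctrine with full co-comprehension satisfying AC,
together with the compatibility of choice arrows for graphs of co-comprehension
arrows with reindexing. -/
structure Eaco [HasFiniteProducts C] [∀ A, SemilatticeInf (P A)]
    [∀ A, OrderBot (P A)] (D : Doctrine C P) where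
  elem : Elementary D
  cocmp : CoComprehension D
  full : cocmp.IsFull
  ac : AxChoice D
  compat : ∀ {X A : C} (f : X ⟶ A) (α : P A)
      (h1 : ¬ StableInitial (cocmp.oObj α))
      (h2 : ¬ StableInitial (cocmp.oObj (D.map f α))),
      D.map f (D.map (prod.lift (𝟙 A)
          (ac.eps h1 (D.map (prod.map (𝟙 A) (cocmp.oArr α)) (elem.eq A))))
        (D.map (prod.map (𝟙 A) (cocmp.oArr α)) (elem.eq A)))
      = D.map (prod.lift (𝟙 X)
          (ac.eps h2 (D.map (prod.map (𝟙 X) (cocmp.oArr (D.map f α))) (elem.eq X))))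
        (D.map (prod.map (𝟙 X) (cocmp.oArr (D.map f α))) (elem.eq X))

/-- Weak power objects: the doctrine is higher order. -/
structure HigherOrder [HasFiniteProducts C] [∀ A, PartialOrder (P A)]
    (D : Doctrine C P) where
  pow : C → C
  mem : ∀ A : C, P (A ⨯ pow A)
  classify : ∀ (A Y : C) (φ : P (A ⨯ Y)),
    ∃ χ : Y ⟶ pow A, D.map (prod.map (𝟙 A) χ) (mem A) = φ

/-- A heaco: a higher order eaco. -/
structure Heaco [HasFiniteProducts C] [∀ A, SemilatticeInf (P A)]
    [∀ A, OrderBot (P A)] (D : Doctrine C P) where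
  eaco : Eaco D
  ho : HigherOrder D

/-- Implicational structure relative to right adjoints `Pi` along projections. -/
structure Implicational [HasFiniteProducts C] [∀ A, PartialOrder (P A)]
    (D : Doctrine C P) (Pi : ∀ (Γ A : C), P (Γ ⨯ A) → P Γ) where
  imp : ∀ {A : C}, P A → P A → P A
  map_imp : ∀ {X A : C} (f : X ⟶ A) (α β : P A),
    D.map f (imp α β) = imp (D.map f α) (D.map f β)
  pi_imp : ∀ {Γ A : C} (α : P Γ) (β : P (Γ ⨯ A)),
    Pi Γ A (imp (D.map prod.fst α) β) = imp α (Pi Γ A β)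
  ax_a : ∀ {A : C} (φ ψ : P A), φ ≤ imp ψ φ
  ax_b : ∀ {A : C} (γ φ ψ : P A), imp γ (imp φ ψ) ≤ imp (imp γ φ) (imp γ ψ)
  ax_c : ∀ {A : C} (γ φ ψ : P A), γ ≤ imp φ ψ → γ ≤ φ → γ ≤ ψ
  ax_d : ∀ {A : C} (γ φ ψ : P A), φ ≤ ψ → γ ≤ imp φ ψ

/-- A tripos: a Heyting-algebra valued doctrine with `Σ` and `Π` along
projections satisfying Beck–Chevalley, equality predicates, and weak power
objects. -/
structure Tripos [HasFiniteProducts C] [∀ A, PartialOrder (P A)]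
    (D : Doctrine C P) where
  inf : ∀ {A : C}, P A → P A → P A
  sup : ∀ {A : C}, P A → P A → P A
  himp : ∀ {A : C}, P A → P A → P A
  top : ∀ A : C, P A
  bot : ∀ A : C, P A
  inf_le_left : ∀ {A : C} (α β : P A), inf α β ≤ α
  inf_le_right : ∀ {A : C} (α β : P A), inf α β ≤ β
  le_inf : ∀ {A : C} (γ α β : P A), γ ≤ α → γ ≤ β → γ ≤ inf α β
  le_sup_left : ∀ {A : C} (α β : P A), α ≤ sup α β
  le_sup_right : ∀ {A : C} (α β : P A), β ≤ sup α β
  sup_le : ∀ {A : C} (α β γ : P A), α ≤ γ → β ≤ γ → sup α β ≤ γ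
  le_top : ∀ {A : C} (α : P A), α ≤ top A
  bot_le : ∀ {A : C} (α : P A), bot A ≤ α
  himp_adj : ∀ {A : C} (γ α β : P A), γ ≤ himp α β ↔ inf γ α ≤ β
  map_inf : ∀ {X A : C} (f : X ⟶ A) (α β : P A),
    D.map f (inf α β) = inf (D.map f α) (D.map f β)
  map_sup : ∀ {X A : C} (f : X ⟶ A) (α β : P A),
    D.map f (sup α β) = sup (D.map f α) (D.map f β)
  map_himp : ∀ {X A : C} (f : X ⟶ A) (α β : P A),
    D.map f (himp α β) = himp (D.map f α) (D.map f β)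
  map_top : ∀ {X A : C} (f : X ⟶ A), D.map f (top A) = top X
  map_bot : ∀ {X A : C} (f : X ⟶ A), D.map f (bot A) = bot X
  Sig : ∀ (Γ A : C), P (Γ ⨯ A) → P Γ
  Sig_adj : ∀ {Γ A : C} (ψ : P (Γ ⨯ A)) (β : P Γ),
    Sig Γ A ψ ≤ β ↔ ψ ≤ D.map prod.fst β
  Sig_bc : ∀ {Γ Δ A : C} (f : Δ ⟶ Γ) (ψ : P (Γ ⨯ A)),
    D.map f (Sig Γ A ψ) = Sig Δ A (D.map (prod.map f (𝟙 A)) ψ)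
  Pi : ∀ (Γ A : C), P (Γ ⨯ A) → P Γ
  Pi_adj : ∀ {Γ A : C} (ψ : P (Γ ⨯ A)) (β : P Γ),
    β ≤ Pi Γ A ψ ↔ D.map prod.fst β ≤ ψ
  Pi_bc : ∀ {Γ Δ A : C} (f : Δ ⟶ Γ) (ψ : P (Γ ⨯ A)),
    D.map f (Pi Γ A ψ) = Pi Δ A (D.map (prod.map f (𝟙 A)) ψ)
  eq : ∀ X : C, P (X ⨯ X)
  eq_spec : ∀ {X : C} (α : P (X ⨯ X)),
    top X ≤ D.map (prod.lift (𝟙 X) (𝟙 X)) α ↔ eq X ≤ α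
  pow : C → C
  mem : ∀ A : C, P (A ⨯ pow A)
  classify : ∀ (A Y : C) (φ : P (A ⨯ Y)),
    ∃ χ : Y ⟶ pow A, D.map (prod.map (𝟙 A) χ) (mem A) = φ

noncomputable section

attribute [local simp] Doctrine.map_id prod.lift_fst prod.lift_snd prod.lift_fst_assoc
  prod.lift_snd_assoc

namespace Doctrine

variable [∀ A, PartialOrder (P A)] (D : Doctrine C P)

@[simp]
lemma map_map {X Y A : C} (f : X ⟶ Y) (g : Y ⟶ A) (α : P A) :
    D.map f (D.map g α) = D.map (f ≫ g) α :=
  (D.map_comp f g α).symm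

end Doctrine

namespace StableInitial

variable [HasFiniteProducts C]

lemma of_iso {Y Z : C} (e : Y ≅ Z) (h : StableInitial Y) : StableInitial Z :=
  ⟨⟨h.1.some.ofIso e⟩, fun W => ⟨prod.mapIso (Iso.refl W) e.symm ≪≫ (h.2 W).some ≪≫ e⟩⟩

lemma isInitial_prod {Z : C} (h : StableInitial Z) (W : C) : Nonempty (IsInitial (W ⨯ Z)) :=
  ⟨h.1.some.ofIso (h.2 W).some.symm⟩

/-- `W ≅ W ⨯ Z ≅ Z`, the first because `W ⨯ Z` is initial. -/
lemma of_hom {W Z : C} (k : W ⟶ Z) (h : StableInitial Z) : StableInitial W := by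
  obtain ⟨hWZ⟩ := h.isInitial_prod W
  refine of_iso (?_ : Z ≅ W) h
  exact (h.2 W).some.symm ≪≫
    { hom := prod.fst
      inv := prod.lift (𝟙 W) k
      hom_inv_id := hWZ.hom_ext _ _
      inv_hom_id := prod.lift_fst _ _ }

end StableInitial

namespace CoComprehension

variable [∀ A, PartialOrder (P A)] [∀ A, OrderBot (P A)] {D : Doctrine C P}
  (co : CoComprehension D)
include co

lemma le_of_map_oArr_eq_bot (hfull : co.IsFull) {A : C} {α β : P A}
    (h : D.map (co.oArr α) β = ⊥) : β ≤ α := by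
  obtain ⟨k, hk, -⟩ := co.univ β (co.oArr α) h
  exact hfull A β α k hk

lemma le_bot_of_isInitial {Z : C} (hZ : IsInitial Z) (α : P Z) : α ≤ ⊥ := by
  have hι : hZ.to (co.oObj α) ≫ co.oArr α = 𝟙 Z := hZ.hom_ext _ _
  calc α = D.map (hZ.to (co.oObj α)) (D.map (co.oArr α) α) := by simp [hι]
    _ = D.map (hZ.to (co.oObj α)) ⊥ := by rw [co.map_oArr]
    _ ≤ D.map (hZ.to (co.oObj α)) (D.map (co.oArr α) ⊥) := D.map_mono _ bot_le
    _ = ⊥ := by simp [hι]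

lemma le_bot_of_hom_stableInitial [HasFiniteProducts C] {W Z : C} (w : W ⟶ Z)
    (hZ : StableInitial Z) (α : P W) : α ≤ ⊥ :=
  calc α = D.map (prod.lift (𝟙 W) w) (D.map prod.fst α) := by simp
    _ ≤ D.map (prod.lift (𝟙 W) w) ⊥ :=
      D.map_mono _ (co.le_bot_of_isInitial (hZ.isInitial_prod W).some _)
    _ ≤ D.map (prod.lift (𝟙 W) w) (D.map prod.fst ⊥) := D.map_mono _ bot_le
    _ = ⊥ := by simp

lemma le_of_stableInitial_oObj [HasFiniteProducts C] (hfull : co.IsFull) {A : C} {β : P A}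
    (h : StableInitial (co.oObj β)) (α : P A) : α ≤ β :=
  co.le_of_map_oArr_eq_bot hfull (le_antisymm (co.le_bot_of_hom_stableInitial (𝟙 _) h _) bot_le)

lemma exists_section_oArr_bot (A : C) : ∃ k : A ⟶ co.oObj (⊥ : P A), k ≫ co.oArr ⊥ = 𝟙 A :=
  (co.univ ⊥ (𝟙 A) (D.map_id ⊥)).exists

lemma not_stableInitial_oObj_bot [HasFiniteProducts C] {A : C} (hA : ¬ StableInitial A) :
    ¬ StableInitial (co.oObj (⊥ : P A)) := fun h =>
  hA (h.of_hom (co.exists_section_oArr_bot A).choose)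

end CoComprehension

namespace Elementary

variable [HasFiniteProducts C] [∀ A, SemilatticeInf (P A)] {D : Doctrine C P} (E : Elementary D)

/-- The predicate `u = v` on `Z`. -/
def eqAt {Z B : C} (u v : Z ⟶ B) : P Z := D.map (prod.lift u v) (E.eq B)

def top (X : C) : P X := E.eqAt (𝟙 X) (𝟙 X)

@[simp]
lemma map_lift_eq {Z B : C} (u v : Z ⟶ B) : D.map (prod.lift u v) (E.eq B) = E.eqAt u v := rfl

@[simp]
lemma map_eqAt {X Z B : C} (f : X ⟶ Z) (u v : Z ⟶ B) :
    D.map f (E.eqAt u v) = E.eqAt (f ≫ u) (f ≫ v) := by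
  simp [← map_lift_eq]

variable (map_inf : ∀ {X A : C} (f : X ⟶ A) (α β : P A),
  D.map f (α ⊓ β) = D.map f α ⊓ D.map f β)
include map_inf

lemma le_eqAt_self {Z B : C} (g : Z ⟶ B) (β : P Z) : β ≤ E.eqAt g g := by
  -- the unit of `eq_adj` at `π₁*β`
  have h := (E.eq_adj Z B (D.map prod.fst β)
    (D.map prod.fst (D.map prod.fst β) ⊓ D.map (prod.map prod.snd (𝟙 B)) (E.eq B))).mp le_rfl
  have h' := D.map_mono (prod.lift (𝟙 Z) g) h
  simp only [map_inf, Doctrine.map_map] at h'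
  simpa using (le_inf_iff.mp h').2

lemma le_top {X : C} (α : P X) : α ≤ E.top X := E.le_eqAt_self map_inf (𝟙 X) α

lemma eqAt_self {Z B : C} (g : Z ⟶ B) : E.eqAt g g = E.top Z :=
  le_antisymm (E.le_top map_inf _) (E.le_eqAt_self map_inf g _)

lemma map_top {X A : C} (f : X ⟶ A) : D.map f (E.top A) = E.top X := by
  simpa [top] using E.eqAt_self map_inf f

lemma subst {Z Y A : C} (φ : P (Y ⨯ A)) (x : Z ⟶ Y) (a a' : Z ⟶ A) :
    D.map (prod.lift x a) φ ⊓ E.eqAt a a' ≤ D.map (prod.lift x a') φ := by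
  have h := (E.eq_adj Y A φ (D.map (prod.map prod.fst (𝟙 A)) φ)).mpr (by simp)
  have h' := D.map_mono (prod.lift (prod.lift x a) a') h
  simpa [map_inf] using h'

lemma map_inf_eqAt_le {Z B : C} (γ : P B) (u v : Z ⟶ B) :
    D.map u γ ⊓ E.eqAt u v ≤ D.map v γ := by
  simpa using E.subst map_inf (D.map prod.snd γ) (𝟙 Z) u v

lemma eqAt_comm {Z B : C} (u v : Z ⟶ B) : E.eqAt u v = E.eqAt v u := by
  have key : ∀ u v : Z ⟶ B, E.eqAt u v ≤ E.eqAt v u := fun u v => by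
    have h := E.subst map_inf (D.map (prod.lift prod.snd prod.fst) (E.eq B)) u u v
    simp only [map_lift_eq, map_eqAt, prod.lift_fst, prod.lift_snd, E.eqAt_self map_inf] at h
    exact le_trans (le_inf (E.le_top map_inf _) le_rfl) h
  exact le_antisymm (key u v) (key v u)

lemma map_eq_self_of_eqAt_eq_top {X : C} {g : X ⟶ X} (hg : E.eqAt (𝟙 X) g = E.top X)
    (γ : P X) : D.map g γ = γ := by
  have h₁ := E.map_inf_eqAt_le map_inf γ (𝟙 X) g
  have h₂ := E.map_inf_eqAt_le map_inf γ g (𝟙 X)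
  rw [D.map_id, hg] at h₁
  rw [D.map_id, E.eqAt_comm map_inf, hg] at h₂
  exact le_antisymm ((le_inf le_rfl (E.le_top map_inf _)).trans h₂)
    ((le_inf le_rfl (E.le_top map_inf _)).trans h₁)

lemma inf_eq_le_map_diag {X : C} (α : P (X ⨯ X)) :
    α ⊓ E.eq X ≤ D.map (prod.lift prod.fst prod.fst) α := by
  have h := E.subst map_inf α prod.fst prod.snd prod.fst
  rwa [E.eqAt_comm map_inf, eqAt, prod.lift_fst_snd, D.map_id, D.map_id] at h

end Elementary

namespace Eaco

variable [HasFiniteProducts C] [∀ A, SemilatticeInf (P A)] [∀ A, OrderBot (P A)]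
  {D : Doctrine C P} (H : Eaco D)

/-- The graph `x = ⌈α⌉ y` of the co-comprehension arrow of `α`, in the form used by
`Eaco.compat`. -/
def coGraph {X : C} (α : P X) : P (X ⨯ H.cocmp.oObj α) :=
  D.map (prod.map (𝟙 X) (H.cocmp.oArr α)) (H.elem.eq X)

lemma coGraph_eq {X : C} (α : P X) :
    H.coGraph α = H.elem.eqAt prod.fst (prod.snd ≫ H.cocmp.oArr α) := by
  rw [coGraph, ← Elementary.map_lift_eq]
  congr 1
  ext <;> simp

/-- `Σ` along `Γ × A → Γ`, totalized by `⊥` over a stable initial `A`, where AC provides none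
(and where the fibres over `Γ × A` are trivial). -/
def Sig (Γ A : C) (ψ : P (Γ ⨯ A)) : P Γ :=
  open Classical in if h : StableInitial A then ⊥ else H.ac.Sig Γ A h ψ

lemma Sig_of_stableInitial {Γ A : C} (h : StableInitial A) (ψ : P (Γ ⨯ A)) :
    H.Sig Γ A ψ = ⊥ := dif_pos h

lemma Sig_eq_map_eps {Γ A : C} (h : ¬ StableInitial A) (ψ : P (Γ ⨯ A)) :
    H.Sig Γ A ψ = D.map (prod.lift (𝟙 Γ) (H.ac.eps h ψ)) ψ :=
  (dif_neg h).trans (H.ac.eps_spec h ψ)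

lemma Sig_le_iff {Γ A : C} (ψ : P (Γ ⨯ A)) (β : P Γ) :
    H.Sig Γ A ψ ≤ β ↔ ψ ≤ D.map prod.fst β := by
  by_cases h : StableInitial A
  · rw [H.Sig_of_stableInitial h]
    exact iff_of_true bot_le ((H.cocmp.le_bot_of_hom_stableInitial prod.snd h ψ).trans bot_le)
  · exact (iff_of_eq (congrArg (· ≤ β) (dif_neg h))).trans (H.ac.adj h ψ β)

lemma map_lift_le_Sig {Γ A : C} (g : Γ ⟶ A) (ψ : P (Γ ⨯ A)) :
    D.map (prod.lift (𝟙 Γ) g) ψ ≤ H.Sig Γ A ψ := by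
  simpa using D.map_mono (prod.lift (𝟙 Γ) g) ((H.Sig_le_iff ψ _).mp le_rfl)

lemma top_le_Sig_coGraph_bot (A : C) :
    H.elem.top A ≤ H.Sig A _ (H.coGraph (⊥ : P A)) := by
  obtain ⟨k, hk⟩ := H.cocmp.exists_section_oArr_bot A
  simpa [coGraph_eq, hk, Elementary.top] using H.map_lift_le_Sig k (H.coGraph ⊥)

variable (map_inf : ∀ {X A : C} (f : X ⟶ A) (α β : P A),
  D.map f (α ⊓ β) = D.map f α ⊓ D.map f β)
include map_inf

lemma inf_Sig_le {Γ A : C} (α : P Γ) (ψ : P (Γ ⨯ A)) :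
    α ⊓ H.Sig Γ A ψ ≤ H.Sig Γ A (D.map prod.fst α ⊓ ψ) := by
  by_cases h : StableInitial A
  · simp [H.Sig_of_stableInitial h]
  · rw [H.Sig_eq_map_eps h ψ]
    simpa [map_inf] using H.map_lift_le_Sig (H.ac.eps h ψ) (D.map prod.fst α ⊓ ψ)

/-- By `Eaco.compat` at `⊥`, the complement of `f*⊥` is `f*(¬⊥) = f*⊤ = ⊤`, i.e.
`x = ⌈f*⊥⌉ (ε x)` holds everywhere; so `f*⊥ = ε*⌈f*⊥⌉*(f*⊥) = ε*⊥`. -/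
lemma map_bot_of_not_stableInitial {X A : C} (f : X ⟶ A) (hA : ¬ StableInitial A)
    (hf : ¬ StableInitial (H.cocmp.oObj (D.map f (⊥ : P A)))) : D.map f (⊥ : P A) = ⊥ := by
  have hA' := H.cocmp.not_stableInitial_oObj_bot hA
  set ε := H.ac.eps hf (H.coGraph (D.map f ⊥))
  set g := ε ≫ H.cocmp.oArr (D.map f ⊥)
  have hg : H.elem.eqAt (𝟙 X) g = H.elem.top X := by
    have htop : H.Sig A _ (H.coGraph (⊥ : P A)) = H.elem.top A :=
      le_antisymm (H.elem.le_top map_inf _) (H.top_le_Sig_coGraph_bot A)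
    have hcompat : D.map f (D.map (prod.lift (𝟙 A) (H.ac.eps hA' (H.coGraph ⊥))) (H.coGraph ⊥)) =
        D.map (prod.lift (𝟙 X) ε) (H.coGraph (D.map f ⊥)) := H.compat f ⊥ hA' hf
    rw [← H.Sig_eq_map_eps hA', htop, H.elem.map_top map_inf] at hcompat
    simpa [g, ε, coGraph_eq] using hcompat.symm
  have hid := H.elem.map_eq_self_of_eqAt_eq_top map_inf hg
  refine le_antisymm ?_ bot_le
  calc D.map f ⊥ = D.map ε (D.map (H.cocmp.oArr _) (D.map f ⊥)) := by
        rw [D.map_map]; exact (hid _).symm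
    _ = D.map ε ⊥ := by rw [H.cocmp.map_oArr]
    _ ≤ D.map ε (D.map (H.cocmp.oArr (D.map f ⊥)) ⊥) := D.map_mono _ bot_le
    _ = ⊥ := by rw [D.map_map]; exact hid ⊥

end Eaco

section Strictness

variable [HasFiniteProducts C] [∀ A, SemilatticeInf (P A)] [∀ A, OrderBot (P A)]
  {D : Doctrine C P}
  (map_inf : ∀ {X A : C} (f : X ⟶ A) (α β : P A),
    D.map f (α ⊓ β) = D.map f α ⊓ D.map f β)
include map_inf

/-- `⊥` and `⊤` on `X` are classified by global elements `χ₀, χ₁` of `P(X)`; if the fibre over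
`⊤_ C` is trivial then `χ₁ = χ₀` holds there, and substitution turns `⊤ = (x ∈ χ₁)` into
`x ∈ χ₀ = ⊥`. -/
lemma HigherOrder.top_le_bot_of_terminal (ho : HigherOrder D) (E : Elementary D)
    (h : E.top (⊤_ C) ≤ ⊥) (X : C) : E.top X ≤ ⊥ := by
  have hmem : ∀ (χ : ⊤_ C ⟶ ho.pow X) (φ : P X),
      D.map (prod.map (𝟙 X) χ) (ho.mem X) = D.map prod.fst φ →
        D.map (prod.lift (𝟙 X) (terminal.from X ≫ χ)) (ho.mem X) = φ := fun χ φ hχ => by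
    simpa using congrArg (D.map (prod.lift (𝟙 X) (terminal.from X))) hχ
  obtain ⟨χ₀, hχ₀⟩ := ho.classify X (⊤_ C) (D.map prod.fst (⊥ : P X))
  obtain ⟨χ₁, hχ₁⟩ := ho.classify X (⊤_ C) (D.map prod.fst (E.top X))
  have hχ : E.top X ≤ E.eqAt (terminal.from X ≫ χ₁) (terminal.from X ≫ χ₀) := by
    rw [← E.map_eqAt, ← E.map_top map_inf (terminal.from X)]
    exact D.map_mono _ (h.trans bot_le)
  have hsubst := E.subst map_inf (ho.mem X) (𝟙 X) (terminal.from X ≫ χ₁) (terminal.from X ≫ χ₀)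
  rw [hmem χ₁ _ hχ₁, hmem χ₀ _ hχ₀] at hsubst
  exact (le_inf le_rfl hχ).trans hsubst

namespace Heaco

variable (H : Heaco D)
include H

lemma top_le_bot_of_top_le_map_bot {X A : C} (f : X ⟶ A)
    (h : H.eaco.elem.top X ≤ D.map f ⊥) : H.eaco.elem.top X ≤ ⊥ := by
  by_cases hX : StableInitial X
  · exact H.eaco.cocmp.le_bot_of_hom_stableInitial (𝟙 X) hX _
  refine H.ho.top_le_bot_of_terminal map_inf H.eaco.elem ?_ X
  -- AC provides a global element `e` of `X`, along which `⊤ ≤ f*⊥` pulls back to `⊤_ C`.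
  set e : ⊤_ C ⟶ X := H.eaco.ac.eps hX (⊥ : P ((⊤_ C) ⨯ X))
  calc H.eaco.elem.top (⊤_ C) = D.map e (H.eaco.elem.top X) := (H.eaco.elem.map_top map_inf e).symm
    _ ≤ D.map e (D.map f ⊥) := D.map_mono e h
    _ ≤ D.map e (D.map f (D.map (terminal.from A) ⊥)) := D.map_mono e (D.map_mono f bot_le)
    _ = ⊥ := by rw [D.map_map, D.map_map, show (e ≫ f) ≫ terminal.from A = 𝟙 _ from
        terminal.hom_ext _ _, D.map_id]

lemma map_bot {X A : C} (f : X ⟶ A) : D.map f (⊥ : P A) = ⊥ := by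
  refine le_antisymm ?_ bot_le
  by_cases hA : StableInitial A
  · exact H.eaco.cocmp.le_bot_of_hom_stableInitial f hA _
  by_cases hf : StableInitial (H.eaco.cocmp.oObj (D.map f (⊥ : P A)))
  · have htop := H.eaco.cocmp.le_of_stableInitial_oObj H.eaco.full hf (H.eaco.elem.top X)
    exact (H.eaco.elem.le_top map_inf _).trans (H.top_le_bot_of_top_le_map_bot map_inf f htop)
  · exact (H.eaco.map_bot_of_not_stableInitial map_inf f hA hf).le

end Heaco

end Strictness

namespace Eaco

variable [HasFiniteProducts C] [∀ A, SemilatticeInf (P A)] [∀ A, OrderBot (P A)]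
  {D : Doctrine C P} (H : Eaco D)

def compl {X : C} (α : P X) : P X := H.Sig X _ (H.coGraph α)

def sup {X : C} (α β : P X) : P X := H.compl (H.compl α ⊓ H.compl β)

def Pi (Γ A : C) (ψ : P (Γ ⨯ A)) : P Γ := H.compl (H.Sig Γ A (H.compl ψ))

variable (map_bot : ∀ {X A : C} (f : X ⟶ A), D.map f (⊥ : P A) = ⊥)
include map_bot

lemma map_Sig {Γ Δ A : C} (f : Δ ⟶ Γ) (ψ : P (Γ ⨯ A)) :
    D.map f (H.Sig Γ A ψ) = H.Sig Δ A (D.map (prod.map f (𝟙 A)) ψ) := by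
  by_cases h : StableInitial A
  · rw [H.Sig_of_stableInitial h, H.Sig_of_stableInitial h, map_bot]
  refine le_antisymm ?_ ?_
  · rw [H.Sig_eq_map_eps h ψ]
    simpa using H.map_lift_le_Sig (f ≫ H.ac.eps h ψ) (D.map (prod.map f (𝟙 A)) ψ)
  · rw [H.Sig_le_iff]
    simpa using D.map_mono (prod.map f (𝟙 A)) ((H.Sig_le_iff ψ _).mp le_rfl)

variable (map_inf : ∀ {X A : C} (f : X ⟶ A) (α β : P A),
  D.map f (α ⊓ β) = D.map f α ⊓ D.map f β)
include map_inf

lemma inf_compl_le_bot {X : C} (α : P X) : α ⊓ H.compl α ≤ ⊥ := by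
  refine (H.inf_Sig_le map_inf α _).trans ((H.Sig_le_iff _ _).mpr ?_)
  have h := H.elem.map_inf_eqAt_le map_inf α prod.fst (prod.snd ≫ H.cocmp.oArr α)
  rw [← D.map_map, H.cocmp.map_oArr, map_bot] at h
  simpa [coGraph_eq, map_bot] using h

lemma top_le_map_compl {X Y : C} {α : P X} (y : Y ⟶ X) (hy : D.map y α = ⊥) :
    H.elem.top Y ≤ D.map y (H.compl α) := by
  obtain ⟨k, hk, -⟩ := H.cocmp.univ α y hy
  rw [compl, H.map_Sig map_bot]
  simpa [coGraph_eq, hk, H.elem.eqAt_self map_inf] using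
    H.map_lift_le_Sig k (D.map (prod.map y (𝟙 _)) (H.coGraph α))

lemma compl_compl_le {X : C} (α : P X) : H.compl (H.compl α) ≤ α := by
  refine H.cocmp.le_of_map_oArr_eq_bot H.full (le_antisymm ?_ bot_le)
  have h := D.map_mono (H.cocmp.oArr α) (H.inf_compl_le_bot map_bot map_inf (H.compl α))
  rw [map_inf, map_bot] at h
  have htop := H.top_le_map_compl map_bot map_inf (H.cocmp.oArr α) (H.cocmp.map_oArr α)
  exact (le_inf ((H.elem.le_top map_inf _).trans htop) le_rfl).trans h

lemma le_compl_of_inf_le_bot {X : C} {γ α : P X} (h : γ ⊓ α ≤ ⊥) : γ ≤ H.compl α := by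
  set o := H.cocmp.oArr (H.compl α)
  refine H.cocmp.le_of_map_oArr_eq_bot H.full (le_antisymm ?_ bot_le)
  have hα : H.elem.top _ ≤ D.map o α :=
    (H.top_le_map_compl map_bot map_inf o (H.cocmp.map_oArr _)).trans
      (D.map_mono o (H.compl_compl_le map_bot map_inf α))
  calc D.map o γ ≤ D.map o γ ⊓ D.map o α := le_inf le_rfl ((H.elem.le_top map_inf _).trans hα)
    _ = D.map o (γ ⊓ α) := (map_inf o γ α).symm
    _ ≤ D.map o ⊥ := D.map_mono o h
    _ = ⊥ := map_bot o

lemma le_compl_iff {X : C} {γ α : P X} : γ ≤ H.compl α ↔ γ ⊓ α ≤ ⊥ :=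
  ⟨fun h => (inf_le_inf_right α h).trans (inf_comm _ α ▸ H.inf_compl_le_bot map_bot map_inf α),
    H.le_compl_of_inf_le_bot map_bot map_inf⟩

lemma le_compl_comm {X : C} {γ α : P X} : γ ≤ H.compl α ↔ α ≤ H.compl γ := by
  rw [H.le_compl_iff map_bot map_inf, H.le_compl_iff map_bot map_inf, inf_comm]

lemma compl_compl {X : C} (α : P X) : H.compl (H.compl α) = α :=
  le_antisymm (H.compl_compl_le map_bot map_inf α)
    ((H.le_compl_comm map_bot map_inf).mp le_rfl)

lemma compl_le_compl {X : C} {α β : P X} (h : α ≤ β) : H.compl β ≤ H.compl α :=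
  (H.le_compl_comm map_bot map_inf).mp (h.trans (H.compl_compl map_bot map_inf β).ge)

lemma compl_top (X : C) : H.compl (H.elem.top X) = ⊥ :=
  le_antisymm ((le_inf (H.elem.le_top map_inf _) le_rfl).trans
    (H.inf_compl_le_bot map_bot map_inf _)) bot_le

lemma map_compl {X A : C} (f : X ⟶ A) (α : P A) :
    D.map f (H.compl α) = H.compl (D.map f α) := by
  refine le_antisymm (H.le_compl_of_inf_le_bot map_bot map_inf ?_) ?_
  · rw [← map_inf, ← map_bot f, inf_comm]
    exact D.map_mono f (H.inf_compl_le_bot map_bot map_inf α)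
  by_cases hf : StableInitial (H.cocmp.oObj (D.map f α))
  · exact (H.Sig_of_stableInitial hf _).le.trans bot_le
  by_cases hα : StableInitial (H.cocmp.oObj α)
  · rw [le_antisymm (H.elem.le_top map_inf α) (H.cocmp.le_of_stableInitial_oObj H.full hα _),
      H.elem.map_top map_inf, H.compl_top map_bot map_inf]
    exact bot_le
  · rw [compl, compl, H.Sig_eq_map_eps hα, H.Sig_eq_map_eps hf]
    exact (H.compat f α hα hf).ge

lemma le_sup_left {X : C} (α β : P X) : α ≤ H.sup α β :=
  (H.le_compl_comm map_bot map_inf).mpr inf_le_left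

lemma le_sup_right {X : C} (α β : P X) : β ≤ H.sup α β :=
  (H.le_compl_comm map_bot map_inf).mpr inf_le_right

lemma sup_le {X : C} {α β γ : P X} (hα : α ≤ γ) (hβ : β ≤ γ) : H.sup α β ≤ γ :=
  calc H.sup α β ≤ H.compl (H.compl γ) := H.compl_le_compl map_bot map_inf <|
        le_inf (H.compl_le_compl map_bot map_inf hα) (H.compl_le_compl map_bot map_inf hβ)
    _ = γ := H.compl_compl map_bot map_inf γ

lemma map_sup {X A : C} (f : X ⟶ A) (α β : P A) :
    D.map f (H.sup α β) = H.sup (D.map f α) (D.map f β) := by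
  simp only [sup, H.map_compl map_bot map_inf, map_inf]

lemma inf_compl_le_iff {X : C} (α β γ : P X) : β ⊓ H.compl α ≤ γ ↔ β ≤ H.sup γ α := by
  conv_lhs => rw [← H.compl_compl map_bot map_inf γ]
  rw [sup, H.le_compl_iff map_bot map_inf, H.le_compl_iff map_bot map_inf, inf_assoc,
    inf_comm (H.compl α)]

lemma le_Pi_iff {Γ A : C} (ψ : P (Γ ⨯ A)) (β : P Γ) :
    β ≤ H.Pi Γ A ψ ↔ D.map prod.fst β ≤ ψ := by
  rw [Pi, H.le_compl_comm map_bot map_inf, H.Sig_le_iff, H.map_compl map_bot map_inf,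
    H.le_compl_comm map_bot map_inf, H.compl_compl map_bot map_inf]

lemma map_Pi {Γ Δ A : C} (f : Δ ⟶ Γ) (ψ : P (Γ ⨯ A)) :
    D.map f (H.Pi Γ A ψ) = H.Pi Δ A (D.map (prod.map f (𝟙 A)) ψ) := by
  simp only [Pi, H.map_compl map_bot map_inf, H.map_Sig map_bot]

lemma map_diag_le_bot_iff {X : C} (α : P (X ⨯ X)) :
    D.map (prod.lift (𝟙 X) (𝟙 X)) α ≤ ⊥ ↔ α ≤ H.compl (H.elem.eq X) := by
  constructor
  · intro h
    refine H.le_compl_of_inf_le_bot map_bot map_inf ((H.elem.inf_eq_le_map_diag map_inf α).trans ?_)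
    calc D.map (prod.lift prod.fst prod.fst) α
        = D.map prod.fst (D.map (prod.lift (𝟙 X) (𝟙 X)) α) := by simp
      _ ≤ ⊥ := (D.map_mono _ h).trans (map_bot _).le
  · intro h
    calc D.map (prod.lift (𝟙 X) (𝟙 X)) α
        ≤ D.map (prod.lift (𝟙 X) (𝟙 X)) (H.compl (H.elem.eq X)) := D.map_mono _ h
      _ = ⊥ := by rw [H.map_compl map_bot map_inf, Elementary.map_lift_eq, ← Elementary.top,
          H.compl_top map_bot map_inf]

end Eaco

namespace Heaco

variable [HasFiniteProducts C] [∀ A, SemilatticeInf (P A)] [∀ A, OrderBot (P A)]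
  {D : Doctrine C P} (H : Heaco D)
  (map_inf : ∀ {X A : C} (f : X ⟶ A) (α β : P A),
    D.map f (α ⊓ β) = D.map f α ⊓ D.map f β)

def opTripos : Tripos D.op where
  inf := H.eaco.sup
  sup α β := (α ⊓ β : P _)
  himp α β := (β ⊓ H.eaco.compl α : P _)
  top _ := (⊥ : P _)
  bot := H.eaco.elem.top
  inf_le_left := H.eaco.le_sup_left (H.map_bot map_inf) map_inf
  inf_le_right := H.eaco.le_sup_right (H.map_bot map_inf) map_inf
  le_inf _ _ _ := H.eaco.sup_le (H.map_bot map_inf) map_inf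
  le_sup_left α β := (inf_le_left : (α ⊓ β : P _) ≤ α)
  le_sup_right α β := (inf_le_right : (α ⊓ β : P _) ≤ β)
  sup_le _ _ _ := le_inf
  le_top α := (bot_le : (⊥ : P _) ≤ α)
  bot_le := H.eaco.elem.le_top map_inf
  himp_adj γ α β := H.eaco.inf_compl_le_iff (H.map_bot map_inf) map_inf α β γ
  map_inf := H.eaco.map_sup (H.map_bot map_inf) map_inf
  map_sup := map_inf
  map_himp f α β := (map_inf f β _).trans
    (congrArg _ (H.eaco.map_compl (H.map_bot map_inf) map_inf f α))
  map_top := H.map_bot map_inf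
  map_bot := H.eaco.elem.map_top map_inf
  Sig := H.eaco.Pi
  Sig_adj := H.eaco.le_Pi_iff (H.map_bot map_inf) map_inf
  Sig_bc := H.eaco.map_Pi (H.map_bot map_inf) map_inf
  Pi := H.eaco.Sig
  Pi_adj := H.eaco.Sig_le_iff
  Pi_bc := H.eaco.map_Sig (H.map_bot map_inf)
  eq X := H.eaco.compl (H.eaco.elem.eq X)
  eq_spec := H.eaco.map_diag_le_bot_iff (H.map_bot map_inf) map_inf
  pow := H.ho.pow
  mem := H.ho.mem
  classify := H.ho.classify

end Heaco

end

/-- Every heaco `(C,P)` gives rise to a tripos `(C,P^o)` on the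
same base category, where `P^o(A) = P(A)^op`. -/
theorem statement16 {C : Type u} [Category.{v} C] [HasFiniteProducts C]
    {P : C → Type w} [∀ A, SemilatticeInf (P A)] [∀ A, OrderBot (P A)]
    (D : Doctrine C P)
    (map_inf : ∀ {X A : C} (f : X ⟶ A) (α β : P A),
      D.map f (α ⊓ β) = D.map f α ⊓ D.map f β)
    (H : Heaco D) : Nonempty (Tripos D.op) :=
  ⟨H.opTripos map_inf⟩
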